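/- Let a₀,…,a_m and b₀,…,b_k be rational numbers and suppose that every coefficient of the tropical product, c_j = min { a_i + b_{j−i} : 0 ≤ i ≤ m, 0 ≤ j−i ≤ k } for 0 ≤ j ≤ m+k, is an integer. Then rounding one factor up and the other down preserves the product: for every j, min { ⌈a_i⌉ + ⌊b_{j−i}⌋ : 0 ≤ i ≤ m, 0 ≤ j−i ≤ k } = c_j. In particular, a tropical polynomial with integer coefficients that factors as a product of two tropical polynomials with rational coefficients also factors as a product of two tropical polynomials of the same degrees with integer coefficients. -/
import Mathlib


/-- Min-plus (tropical) convolution of a sequence `a` supported on `{0,…,m}` with a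
sequence `b` supported on `{0,…,k}`: `c j = min_i (a i + b (j - i))`. -/
noncomputable def tropConv (m k : ℕ) (a b : ℕ → ℝ) (j : ℕ) : ℝ :=
  sInf {x : ℝ | ∃ i : ℕ, i ≤ m ∧ i ≤ j ∧ j - i ≤ k ∧ x = a i + b (j - i)}

lemma tropConv_set_finite (m k : ℕ) (a b : ℕ → ℝ) (j : ℕ) :
    {x : ℝ | ∃ i : ℕ, i ≤ m ∧ i ≤ j ∧ j - i ≤ k ∧ x = a i + b (j - i)}.Finite := by
  apply Set.Finite.subset ((Set.finite_Iic j).image (fun i => a i + b (j - i)))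
  rintro x ⟨i, h1, h2, h3, rfl⟩
  exact ⟨i, h2, rfl⟩

lemma tropConv_set_nonempty (m k : ℕ) (a b : ℕ → ℝ) (j : ℕ) (hj : j ≤ m + k) :
    {x : ℝ | ∃ i : ℕ, i ≤ m ∧ i ≤ j ∧ j - i ≤ k ∧ x = a i + b (j - i)}.Nonempty :=
  ⟨a (j - k) + b (j - (j - k)), j - k, by omega, by omega, by omega, rfl⟩

lemma tropConv_le (m k : ℕ) (a b : ℕ → ℝ) (j i : ℕ)
    (h1 : i ≤ m) (h2 : i ≤ j) (h3 : j - i ≤ k) :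
    tropConv m k a b j ≤ a i + b (j - i) :=
  csInf_le (tropConv_set_finite m k a b j).bddBelow ⟨i, h1, h2, h3, rfl⟩

lemma le_tropConv (m k : ℕ) (a b : ℕ → ℝ) (j : ℕ) (hj : j ≤ m + k) (y : ℝ)
    (h : ∀ i : ℕ, i ≤ m → i ≤ j → j - i ≤ k → y ≤ a i + b (j - i)) :
    y ≤ tropConv m k a b j := by
  apply le_csInf (tropConv_set_nonempty m k a b j hj)
  rintro x ⟨i, h1, h2, h3, rfl⟩
  exact h i h1 h2 h3

lemma tropConv_attained (m k : ℕ) (a b : ℕ → ℝ) (j : ℕ) (hj : j ≤ m + k) :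
    ∃ i : ℕ, i ≤ m ∧ i ≤ j ∧ j - i ≤ k ∧ tropConv m k a b j = a i + b (j - i) :=
  (tropConv_set_nonempty m k a b j hj).csInf_mem (tropConv_set_finite m k a b j)

/-- If the tropical product of two rational tropical polynomials has integer
coefficients, then rounding the coefficients of one factor up and the other down
preserves the product; in particular an integer tropical polynomial that factors
over `ℚ` also factors, with the same degrees, over `ℤ`. -/
theorem rational_factorization_to_integer (m k : ℕ) (a b : ℕ → ℚ) (c : ℕ → ℤ)
    (hc : ∀ j ≤ m + k,
      tropConv m k (fun i => (a i : ℝ)) (fun i => (b i : ℝ)) j = (c j : ℝ)) :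
    (∀ j ≤ m + k,
      tropConv m k (fun i => ((⌈a i⌉ : ℤ) : ℝ)) (fun i => ((⌊b i⌋ : ℤ) : ℝ)) j
        = (c j : ℝ)) ∧
    (∃ A B : ℕ → ℤ, ∀ j ≤ m + k,
      tropConv m k (fun i => ((A i : ℤ) : ℝ)) (fun i => ((B i : ℤ) : ℝ)) j
        = (c j : ℝ)) := by
  have key : ∀ j ≤ m + k,
      tropConv m k (fun i => ((⌈a i⌉ : ℤ) : ℝ)) (fun i => ((⌊b i⌋ : ℤ) : ℝ)) j
        = (c j : ℝ) := by
    intro j hj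
    -- lower bound: every term is ≥ c j
    have lower : ∀ i : ℕ, i ≤ m → i ≤ j → j - i ≤ k →
        (c j : ℝ) ≤ ((⌈a i⌉ : ℤ) : ℝ) + ((⌊b (j - i)⌋ : ℤ) : ℝ) := by
      intro i h1 h2 h3
      have hle : (c j : ℝ) ≤ (a i : ℝ) + (b (j - i) : ℝ) := by
        rw [← hc j hj]
        exact tropConv_le m k _ _ j i h1 h2 h3
      have hleQ : (c j : ℚ) ≤ a i + b (j - i) := by exact_mod_cast hle
      have h4 : a i ≤ (⌈a i⌉ : ℚ) := Int.le_ceil _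
      have h5 : b (j - i) - 1 < (⌊b (j - i)⌋ : ℚ) := Int.sub_one_lt_floor _
      have hint : c j ≤ ⌈a i⌉ + ⌊b (j - i)⌋ := by
        have : (c j : ℚ) - 1 < ((⌈a i⌉ + ⌊b (j - i)⌋ : ℤ) : ℚ) := by
          push_cast
          linarith
        have : (c j : ℚ) < ((⌈a i⌉ + ⌊b (j - i)⌋ : ℤ) : ℚ) + 1 := by linarith
        have := (by exact_mod_cast this : c j < ⌈a i⌉ + ⌊b (j - i)⌋ + 1)
        omega
      exact_mod_cast hint
    -- upper bound: the minimizer of the rational product gives exactly c j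
    obtain ⟨i, h1, h2, h3, heq⟩ :=
      tropConv_attained m k (fun i => (a i : ℝ)) (fun i => (b i : ℝ)) j hj
    have heqQ : a i + b (j - i) = (c j : ℚ) := by
      have : (a i : ℝ) + (b (j - i) : ℝ) = (c j : ℝ) := by
        rw [← hc j hj, heq]
      exact_mod_cast this
    have hb : b (j - i) = ((c j : ℤ) : ℚ) + (- a i) := by linarith
    have hround : ⌈a i⌉ + ⌊b (j - i)⌋ = c j := by
      rw [hb, Int.floor_intCast_add, Int.floor_neg]
      ring
    have hcast : ((⌈a i⌉ : ℤ) : ℝ) + ((⌊b (j - i)⌋ : ℤ) : ℝ) = (c j : ℝ) := by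
      exact_mod_cast congrArg (fun z : ℤ => (z : ℝ)) hround
    refine le_antisymm ?_ ?_
    · have := tropConv_le m k (fun i => ((⌈a i⌉ : ℤ) : ℝ))
        (fun i => ((⌊b i⌋ : ℤ) : ℝ)) j i h1 h2 h3
      simpa [hcast] using this
    · exact le_tropConv m k _ _ j hj _ lower
  exact ⟨key, (fun i => ⌈a i⌉), (fun i => ⌊b i⌋), key⟩
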